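/- arXiv:2406.15645 — 3 statements merged into one kernel-verified Lean document; each statement's English description precedes it below -/
import Mathlib

section
/- If a real Lie algebra g has a nonzero abelian ideal I, then every linear form ω ∈ g* vanishing on I has Cartan class cl(ω) ≤ dim g − dim I; in particular g admits no linear form of maximal class n = dim g among forms vanishing on I. -/
/-- The characteristic space `C(ω) = ker ω ∩ {X : ω([X,Y]) = 0 ∀ Y}` of a linear
form `ω` on a Lie algebra. -/
def charSpace (K : Type*) [Field K] (L : Type*) [LieRing L] [LieAlgebra K L]
    (ω : Module.Dual K L) : Submodule K L where
  carrier := {X | ω X = 0 ∧ ∀ Y : L, ω ⁅X, Y⁆ = 0}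
  add_mem' := by
    rintro a b ⟨ha1, ha2⟩ ⟨hb1, hb2⟩
    exact ⟨by simp [ha1, hb1], fun Y => by simp [add_lie, ha2 Y, hb2 Y]⟩
  zero_mem' := ⟨by simp, fun Y => by simp⟩
  smul_mem' := by
    rintro c a ⟨h1, h2⟩
    exact ⟨by simp [h1], fun Y => by simp [smul_lie, h2 Y]⟩

/-- The Cartan class of a linear form on a Lie algebra: the codimension of its
characteristic space. -/
noncomputable def cartanClass (K : Type*) [Field K] (L : Type*) [LieRing L] [LieAlgebra K L]
    (ω : Module.Dual K L) : ℕ :=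
  Module.finrank K L - Module.finrank K (charSpace K L ω)

/-!
An ideal `I` on which `ω` vanishes lies in `C(ω)`: for `X ∈ I` the bracket `[X, Y] = -[Y, X]`
is again in `I`. Hence `dim C(ω) ≥ dim I ≥ 1`, which bounds the class by `dim g - dim I < dim g`.
-/

section CartanClass

variable {K : Type*} [Field K] {L : Type*} [LieRing L] [LieAlgebra K L]

theorem lieIdeal_le_charSpace {I : LieIdeal K L} {ω : Module.Dual K L}
    (hω : ∀ X ∈ I, ω X = 0) : (I : Submodule K L) ≤ charSpace K L ω := by
  intro X hX
  refine ⟨hω X hX, fun Y => ?_⟩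
  rw [← lie_skew, map_neg, hω _ (I.lie_mem hX), neg_zero]

variable [Module.Finite K L]

theorem cartanClass_le_finrank_sub_of_le_charSpace {ω : Module.Dual K L} {N : Submodule K L}
    (hN : N ≤ charSpace K L ω) :
    cartanClass K L ω ≤ Module.finrank K L - Module.finrank K N :=
  Nat.sub_le_sub_left (Submodule.finrank_mono hN) _

theorem cartanClass_lt_finrank_of_charSpace_ne_bot {ω : Module.Dual K L}
    (hω : charSpace K L ω ≠ ⊥) : cartanClass K L ω < Module.finrank K L := by
  have hpos : 0 < Module.finrank K (charSpace K L ω) :=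
    Nat.pos_of_ne_zero fun h => hω (Submodule.finrank_eq_zero.mp h)
  have hle : Module.finrank K (charSpace K L ω) ≤ Module.finrank K L := Submodule.finrank_le _
  unfold cartanClass
  omega

end CartanClass

theorem cartanClass_le_of_abelian_ideal_general
    (g : Type*) [LieRing g] [LieAlgebra ℝ g] [Module.Finite ℝ g]
    (I : LieIdeal ℝ g) (hI : I ≠ ⊥)
    (ω : Module.Dual ℝ g) (hω : ∀ X ∈ I, ω X = 0) :
    cartanClass ℝ g ω ≤ Module.finrank ℝ g - Module.finrank ℝ I ∧
      cartanClass ℝ g ω ≠ Module.finrank ℝ g := by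
  have hle := lieIdeal_le_charSpace hω
  have hC : charSpace ℝ g ω ≠ ⊥ := fun h =>
    hI ((LieSubmodule.toSubmodule_eq_bot I).mp (le_bot_iff.mp (h ▸ hle)))
  exact ⟨cartanClass_le_finrank_sub_of_le_charSpace hle,
    (cartanClass_lt_finrank_of_charSpace_ne_bot hC).ne⟩

/-- If a real Lie algebra `g` has a nonzero abelian ideal `I`, then every linear
form `ω` vanishing on `I` has Cartan class at most `dim g - dim I`; in particular
such a form is never of maximal class `dim g`. -/
theorem cartanClass_le_of_abelian_ideal
    (g : Type*) [LieRing g] [LieAlgebra ℝ g] [Module.Finite ℝ g]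
    (I : LieIdeal ℝ g) (hI : I ≠ ⊥) (hab : IsLieAbelian I)
    (ω : Module.Dual ℝ g) (hω : ∀ X ∈ I, ω X = 0) :
    cartanClass ℝ g ω ≤ Module.finrank ℝ g - Module.finrank ℝ I ∧
      cartanClass ℝ g ω ≠ Module.finrank ℝ g :=
  cartanClass_le_of_abelian_ideal_general g I hI ω hω
end

section
/- Let a ∈ SL(2p, ℝ) and let ℓ_a = a^{-1} ⊗ Id act on 1-forms via the left translation L_a (with (L_a)^T(e) = a ⊗ Id). The pullback of ω(e) = Σ_i (−da_{i,i+1}(e) + da_{i+1,i}(e))-type expression under left translation by a equals ω(a) if and only if (−1)^i A_{i,2j} = a_{i,2j} and (−1)^i A_{i,2j−1} = −a_{i,2j−1} for all i, j, which holds if and only if a^t a = Id, i.e., a ∈ SO(2p). -/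
open Matrix

/-- The column index `2j - 1` (1-indexed), first member of the `j`-th pair. -/
def colA (p : ℕ) (j : Fin p) : Fin (2 * p) := ⟨2 * j.val, by have := j.isLt; omega⟩

/-- The column index `2j` (1-indexed), second member of the `j`-th pair. -/
def colB (p : ℕ) (j : Fin p) : Fin (2 * p) := ⟨2 * j.val + 1, by have := j.isLt; omega⟩

/-- The Pfaffian form `ω = Σ_{i,j} (a_{i,2j} da_{i,2j-1} - a_{i,2j-1} da_{i,2j})`
at the point `M`, evaluated on the tangent vector `X`. -/
def omegaFun (p : ℕ) (M X : Matrix (Fin (2 * p)) (Fin (2 * p)) ℝ) : ℝ :=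
  ∑ i : Fin (2 * p), ∑ j : Fin p,
    (M i (colB p j) * X i (colA p j) - M i (colA p j) * X i (colB p j))

/-- The `(i,j)` minor `A_{i,j}` of `a` (determinant of `a` with row `i` and
column `j` deleted), expressed through the adjugate: `A_{i,j} = (-1)^{i+j} adj(a)_{j,i}`. -/
noncomputable def minorA (p : ℕ) (a : Matrix (Fin (2 * p)) (Fin (2 * p)) ℝ)
    (i q : Fin (2 * p)) : ℝ :=
  (-1 : ℝ) ^ (i.val + q.val) * a.adjugate q i

/-! `ω(M)(X)` depends only on `Mᵀ X`, through its pairing with the standard symplectic form, so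
`ω(a)(a X) = ω(e)(X)` for all `X` says that `aᵀ a X` and `X` always pair alike; testing on matrix
units, whose pairing reads off single entries, gives `aᵀ a = 1`. On the other side, the signs
`(-1)^i` turn the minor conditions into `adj a = aᵀ`, which for `det a = 1` means `a⁻¹ = aᵀ`. -/

theorem colA_injective (p : ℕ) : Function.Injective (colA p) := by
  intro j j' h
  simp only [colA, Fin.ext_iff] at h
  exact Fin.ext (by omega)

theorem colB_injective (p : ℕ) : Function.Injective (colB p) := by
  intro j j' h
  simp only [colB, Fin.ext_iff] at h
  exact Fin.ext (by omega)

theorem colA_ne_colB {p : ℕ} (j j' : Fin p) : colA p j ≠ colB p j' := by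
  simp only [colA, colB, ne_eq, Fin.ext_iff]
  omega

theorem exists_eq_colA_or_colB {p : ℕ} (q : Fin (2 * p)) :
    (∃ j, q = colA p j) ∨ (∃ j, q = colB p j) := by
  rcases Nat.even_or_odd q.val with ⟨r, hr⟩ | ⟨r, hr⟩
  · exact Or.inl ⟨⟨r, by omega⟩, Fin.ext (by simp only [colA]; omega)⟩
  · exact Or.inr ⟨⟨r, by omega⟩, Fin.ext (by simp only [colB]; omega)⟩

theorem forall_colB_and_colA_iff {p : ℕ} {P : Fin (2 * p) → Prop} :
    (∀ j, P (colB p j) ∧ P (colA p j)) ↔ ∀ q, P q := by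
  refine ⟨fun h q => ?_, fun h j => ⟨h _, h _⟩⟩
  rcases exists_eq_colA_or_colB q with ⟨j, rfl⟩ | ⟨j, rfl⟩
  exacts [(h j).2, (h j).1]

def symplecticPairing (p : ℕ) (Y : Matrix (Fin (2 * p)) (Fin (2 * p)) ℝ) : ℝ :=
  ∑ j : Fin p, (Y (colB p j) (colA p j) - Y (colA p j) (colB p j))

theorem omegaFun_eq_symplecticPairing (p : ℕ) (M X : Matrix (Fin (2 * p)) (Fin (2 * p)) ℝ) :
    omegaFun p M X = symplecticPairing p (Mᵀ * X) := by
  simp only [omegaFun, symplecticPairing, mul_apply, transpose_apply, ← Finset.sum_sub_distrib]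
  exact Finset.sum_comm

theorem symplecticPairing_mul_single_colA (p : ℕ) (B : Matrix (Fin (2 * p)) (Fin (2 * p)) ℝ)
    (k : Fin (2 * p)) (j : Fin p) :
    symplecticPairing p (B * single k (colA p j) 1) = B (colB p j) k := by
  rw [symplecticPairing, Finset.sum_eq_single j]
  · simp [mul_single_apply_of_ne (hbj := (colA_ne_colB j j).symm)]
  · intro j' _ hj'
    rw [mul_single_apply_of_ne (hbj := (colA_injective p).ne hj'),
      mul_single_apply_of_ne (hbj := (colA_ne_colB j j').symm), sub_zero]
  · simp

theorem symplecticPairing_mul_single_colB (p : ℕ) (B : Matrix (Fin (2 * p)) (Fin (2 * p)) ℝ)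
    (k : Fin (2 * p)) (j : Fin p) :
    symplecticPairing p (B * single k (colB p j) 1) = -B (colA p j) k := by
  rw [symplecticPairing, Finset.sum_eq_single j]
  · simp [mul_single_apply_of_ne (hbj := colA_ne_colB j j)]
  · intro j' _ hj'
    rw [mul_single_apply_of_ne (hbj := colA_ne_colB j' j),
      mul_single_apply_of_ne (hbj := (colB_injective p).ne hj'), sub_zero]
  · simp

theorem eq_of_forall_symplecticPairing_mul_eq {p : ℕ}
    {B C : Matrix (Fin (2 * p)) (Fin (2 * p)) ℝ}
    (h : ∀ X, symplecticPairing p (B * X) = symplecticPairing p (C * X)) : B = C := by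
  ext q k
  rcases exists_eq_colA_or_colB q with ⟨j, rfl⟩ | ⟨j, rfl⟩
  · simpa only [symplecticPairing_mul_single_colB, neg_inj] using h (single k (colB p j) 1)
  · simpa only [symplecticPairing_mul_single_colA] using h (single k (colA p j) 1)

theorem omegaFun_left_invariant_iff (p : ℕ) (a : Matrix (Fin (2 * p)) (Fin (2 * p)) ℝ) :
    (∀ X, omegaFun p a (a * X) = omegaFun p 1 X) ↔ aᵀ * a = 1 := by
  simp only [omegaFun_eq_symplecticPairing, transpose_one, Matrix.one_mul, ← Matrix.mul_assoc]
  refine ⟨fun h => eq_of_forall_symplecticPairing_mul_eq (by simpa only [Matrix.one_mul] using h),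
    fun h X => by rw [h, Matrix.one_mul]⟩

theorem neg_one_pow_succ_mul_minorA (p : ℕ) (a : Matrix (Fin (2 * p)) (Fin (2 * p)) ℝ)
    (i q : Fin (2 * p)) :
    (-1 : ℝ) ^ (i.val + 1) * minorA p a i q = (-1) ^ (q.val + 1) * a.adjugate q i := by
  rw [minorA, ← mul_assoc, ← pow_add,
    show i.val + 1 + (i.val + q.val) = q.val + 1 + 2 * i.val by ring,
    pow_add, pow_mul, neg_one_sq, one_pow, mul_one]

theorem neg_one_pow_colA_succ (p : ℕ) (j : Fin p) : (-1 : ℝ) ^ ((colA p j).val + 1) = -1 :=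
  Odd.neg_one_pow ⟨j.val, rfl⟩

theorem neg_one_pow_colB_succ (p : ℕ) (j : Fin p) : (-1 : ℝ) ^ ((colB p j).val + 1) = 1 :=
  Even.neg_one_pow ⟨j.val + 1, by simp only [colB]; ring⟩

theorem minorA_condition_iff_adjugate_eq_transpose (p : ℕ)
    (a : Matrix (Fin (2 * p)) (Fin (2 * p)) ℝ) :
    (∀ (i : Fin (2 * p)) (j : Fin p),
        (-1 : ℝ) ^ (i.val + 1) * minorA p a i (colB p j) = a i (colB p j) ∧
        (-1 : ℝ) ^ (i.val + 1) * minorA p a i (colA p j) = -(a i (colA p j))) ↔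
      a.adjugate = aᵀ := by
  simp only [neg_one_pow_succ_mul_minorA, neg_one_pow_colA_succ, neg_one_pow_colB_succ, one_mul,
    neg_one_mul, neg_inj]
  exact (forall_congr' fun i =>
    forall_colB_and_colA_iff (P := fun q => a.adjugate q i = aᵀ q i)).trans
      (forall_comm.trans Matrix.ext_iff)

theorem Matrix.adjugate_eq_transpose_iff {n R : Type*} [Fintype n] [DecidableEq n] [CommRing R]
    {A : Matrix n n R} (hA : A.det = 1) : A.adjugate = Aᵀ ↔ Aᵀ * A = 1 := by
  refine ⟨fun h => by rw [← h, adjugate_mul, hA, one_smul], fun h => ?_⟩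
  calc A.adjugate = A.adjugate * (A * Aᵀ) := by rw [mul_eq_one_comm.mp h, Matrix.mul_one]
    _ = Aᵀ := by rw [← Matrix.mul_assoc, adjugate_mul, hA, one_smul, Matrix.one_mul]

theorem left_invariance_at_identity_iff_SO_general (p : ℕ)
    (a : Matrix (Fin (2 * p)) (Fin (2 * p)) ℝ) (ha : a.det = 1) :
    ((∀ X : Matrix (Fin (2 * p)) (Fin (2 * p)) ℝ,
        omegaFun p a (a * X) = omegaFun p 1 X) ↔
      (∀ (i : Fin (2 * p)) (j : Fin p),
        (-1 : ℝ) ^ (i.val + 1) * minorA p a i (colB p j) = a i (colB p j) ∧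
        (-1 : ℝ) ^ (i.val + 1) * minorA p a i (colA p j) = -(a i (colA p j)))) ∧
    ((∀ X : Matrix (Fin (2 * p)) (Fin (2 * p)) ℝ,
        omegaFun p a (a * X) = omegaFun p 1 X) ↔ aᵀ * a = 1) := by
  rw [minorA_condition_iff_adjugate_eq_transpose, Matrix.adjugate_eq_transpose_iff ha,
    omegaFun_left_invariant_iff]
  exact ⟨Iff.rfl, Iff.rfl⟩

/-- For `a ∈ SL(2p,ℝ)`, the pullback of `ω` under left translation by `a`
coincides with `ω(a)` iff `(-1)^i A_{i,2j} = a_{i,2j}` and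
`(-1)^i A_{i,2j-1} = -a_{i,2j-1}` for all `i,j` (1-indexed), which holds iff
`aᵀ a = 1`, i.e. `a ∈ SO(2p)`. -/
theorem left_invariance_at_identity_iff_SO (p : ℕ) (hp : 0 < p)
    (a : Matrix (Fin (2 * p)) (Fin (2 * p)) ℝ) (ha : a.det = 1) :
    ((∀ X : Matrix (Fin (2 * p)) (Fin (2 * p)) ℝ,
        omegaFun p a (a * X) = omegaFun p 1 X) ↔
      (∀ (i : Fin (2 * p)) (j : Fin p),
        (-1 : ℝ) ^ (i.val + 1) * minorA p a i (colB p j) = a i (colB p j) ∧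
        (-1 : ℝ) ^ (i.val + 1) * minorA p a i (colA p j) = -(a i (colA p j)))) ∧
    ((∀ X : Matrix (Fin (2 * p)) (Fin (2 * p)) ℝ,
        omegaFun p a (a * X) = omegaFun p 1 X) ↔ aᵀ * a = 1) :=
  left_invariance_at_identity_iff_SO_general p a ha
end

section
/- The contact form ω = Σ_{i=1}^{2p} Σ_{j=1}^{p} (a_{i,2j} da_{i,2j−1} − a_{i,2j−1} da_{i,2j}) on SL(2p,ℝ) is invariant under right translation R_a(b) = ba if and only if a ∈ H = {a ∈ SL(2p,ℝ) : a^t J_{2p} a = J_{2p}}, where J_{2p} = Id_p ⊗ J_2 and J_2 = [[0,1],[−1,0]]; i.e., the maximal right-invariance group of ω is the symplectic group Sp(2p,ℝ) (with respect to J_{2p}). -/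
open Matrix

/-- The block-diagonal matrix `J_{2p} = Id_p ⊗ J_2` with `J_2 = [[0,1],[-1,0]]`. -/
def Jmat (p : ℕ) : Matrix (Fin (2 * p)) (Fin (2 * p)) ℝ :=
  Matrix.of fun i j =>
    if j.val = i.val + 1 ∧ i.val % 2 = 0 then 1
    else if i.val = j.val + 1 ∧ j.val % 2 = 0 then -1
    else 0

/-! Since `ω(M, X) = tr (X J Mᵀ)`, the pull-back of `ω` by `R_a` is `tr (X (a J aᵀ) Mᵀ)`.
Taking `M = 1`, invariance says that the skew-symmetric matrix `a J aᵀ - J` is trace-orthogonal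
to every traceless `X`, which forces it to vanish. Finally `a J aᵀ = J ↔ aᵀ J a = J` because
`J² = -1`. -/

namespace Matrix

variable {n R : Type*} [Fintype n] [DecidableEq n]

theorem transpose_mul_mul_eq_of_mul_mul_transpose_eq [CommRing R] {J a : Matrix n n R}
    (hJ : J * J = -1) (h : a * J * aᵀ = J) : aᵀ * J * a = J := by
  have hright : a * (J * aᵀ * -J) = 1 := by
    rw [← Matrix.mul_assoc, ← Matrix.mul_assoc, h, Matrix.mul_neg, hJ, neg_neg]
  have hleft : J * aᵀ * -J * a = 1 := mul_eq_one_comm.mp hright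
  calc aᵀ * J * a = -(J * J) * (aᵀ * J * a) := by rw [hJ, neg_neg, Matrix.one_mul]
    _ = J * (J * aᵀ * -J * a) := by
        simp only [Matrix.neg_mul, Matrix.mul_neg, Matrix.mul_assoc]
    _ = J := by rw [hleft, Matrix.mul_one]

theorem mul_mul_transpose_eq_iff_transpose_mul_mul_eq [CommRing R] {J a : Matrix n n R}
    (hJ : J * J = -1) :
    a * J * aᵀ = J ↔ aᵀ * J * a = J := by
  refine ⟨transpose_mul_mul_eq_of_mul_mul_transpose_eq hJ, fun h => ?_⟩
  simpa using transpose_mul_mul_eq_of_mul_mul_transpose_eq (a := aᵀ) hJ (by simpa using h)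

theorem eq_zero_of_transpose_eq_neg_of_trace_mul_eq_zero [CommRing R] [NoZeroDivisors R]
    [CharZero R] {C : Matrix n n R} (hskew : Cᵀ = -C)
    (h : ∀ X : Matrix n n R, X.trace = 0 → (X * C).trace = 0) : C = 0 := by
  ext k l
  by_cases hkl : k = l
  · subst hkl
    have hdiag : C k k = -C k k := by simpa using congrFun (congrFun hskew k) k
    simpa using self_eq_neg.mp hdiag
  · simpa [trace_single_mul] using h (single l k 1) (trace_single_eq_of_ne l k 1 (Ne.symm hkl))

end Matrix

open Matrix

section Jmat

variable {p : ℕ}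

def pairEquiv (p : ℕ) : Fin p × Fin 2 ≃ Fin (2 * p) :=
  finProdFinEquiv.trans (finCongr (Nat.mul_comm p 2))

theorem pairEquiv_zero (j : Fin p) : pairEquiv p (j, 0) = colA p j := by
  ext; simp [pairEquiv, colA]

theorem pairEquiv_one (j : Fin p) : pairEquiv p (j, 1) = colB p j := by
  ext; simp [pairEquiv, colB]; omega

theorem sum_fin_two_mul {M : Type*} [AddCommMonoid M] (f : Fin (2 * p) → M) :
    ∑ l, f l = ∑ j : Fin p, (f (colA p j) + f (colB p j)) := by
  rw [← (pairEquiv p).sum_comp, Fintype.sum_prod_type]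
  simp only [Fin.sum_univ_two, pairEquiv_zero, pairEquiv_one]

theorem colA_or_colB (l : Fin (2 * p)) : (∃ j, l = colA p j) ∨ (∃ j, l = colB p j) := by
  obtain ⟨⟨j, r⟩, rfl⟩ := (pairEquiv p).surjective l
  fin_cases r
  · exact Or.inl ⟨j, pairEquiv_zero j⟩
  · exact Or.inr ⟨j, pairEquiv_one j⟩

theorem Jmat_apply_colA (k : Fin (2 * p)) (j : Fin p) :
    Jmat p k (colA p j) = if k = colB p j then -1 else 0 := by
  simp only [Jmat, of_apply, colA, colB, Fin.ext_iff]
  split_ifs <;> first | rfl | omega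

theorem Jmat_apply_colB (k : Fin (2 * p)) (j : Fin p) :
    Jmat p k (colB p j) = if k = colA p j then 1 else 0 := by
  simp only [Jmat, of_apply, colA, colB, Fin.ext_iff]
  split_ifs <;> first | rfl | omega

theorem mul_Jmat_colA (X : Matrix (Fin (2 * p)) (Fin (2 * p)) ℝ) (i : Fin (2 * p)) (j : Fin p) :
    (X * Jmat p) i (colA p j) = -X i (colB p j) := by
  simp [mul_apply, Jmat_apply_colA]

theorem mul_Jmat_colB (X : Matrix (Fin (2 * p)) (Fin (2 * p)) ℝ) (i : Fin (2 * p)) (j : Fin p) :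
    (X * Jmat p) i (colB p j) = X i (colA p j) := by
  simp [mul_apply, Jmat_apply_colB]

theorem Jmat_transpose : (Jmat p)ᵀ = -Jmat p := by
  ext i j
  simp only [transpose_apply, Matrix.neg_apply, Jmat, of_apply]
  split_ifs <;> first | ring1 | (exfalso; omega)

theorem Jmat_mul_self : Jmat p * Jmat p = -1 := by
  ext i l
  rcases colA_or_colB l with ⟨j, rfl⟩ | ⟨j, rfl⟩
  · rw [mul_Jmat_colA, Jmat_apply_colB, Matrix.neg_apply, one_apply]
  · rw [mul_Jmat_colB, Jmat_apply_colA, Matrix.neg_apply, one_apply]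
    split_ifs <;> simp

theorem omegaFun_eq_trace (M X : Matrix (Fin (2 * p)) (Fin (2 * p)) ℝ) :
    omegaFun p M X = (X * Jmat p * Mᵀ).trace := by
  refine Finset.sum_congr rfl fun i _ => ?_
  rw [diag_apply, mul_apply, sum_fin_two_mul fun l => (X * Jmat p) i l * Mᵀ l i]
  refine Finset.sum_congr rfl fun j _ => ?_
  rw [mul_Jmat_colA, mul_Jmat_colB, transpose_apply, transpose_apply]
  ring

theorem omegaFun_mul_right (a b X : Matrix (Fin (2 * p)) (Fin (2 * p)) ℝ) :
    omegaFun p (b * a) (X * a) = (X * (a * Jmat p * aᵀ) * bᵀ).trace := by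
  simp only [omegaFun_eq_trace, transpose_mul, Matrix.mul_assoc]

end Jmat

theorem right_invariance_iff_symplectic_general (p : ℕ)
    (a : Matrix (Fin (2 * p)) (Fin (2 * p)) ℝ) :
    (∀ b X : Matrix (Fin (2 * p)) (Fin (2 * p)) ℝ, b.det = 1 →
        (b.adjugate * X).trace = 0 →
        omegaFun p (b * a) (X * a) = omegaFun p b X) ↔
      aᵀ * Jmat p * a = Jmat p := by
  rw [← mul_mul_transpose_eq_iff_transpose_mul_mul_eq Jmat_mul_self]
  constructor
  · intro h
    have hskew : (a * Jmat p * aᵀ - Jmat p)ᵀ = -(a * Jmat p * aᵀ - Jmat p) := by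
      simp only [transpose_sub, transpose_mul, transpose_transpose, Jmat_transpose,
        Matrix.mul_neg, Matrix.neg_mul, Matrix.mul_assoc, neg_sub, sub_neg_eq_add]
      abel
    have horth (X : Matrix (Fin (2 * p)) (Fin (2 * p)) ℝ) (hX : X.trace = 0) :
        (X * (a * Jmat p * aᵀ - Jmat p)).trace = 0 := by
      have hX1 := h 1 X det_one (by rwa [adjugate_one, Matrix.one_mul])
      rw [omegaFun_mul_right, omegaFun_eq_trace, transpose_one, Matrix.mul_one,
        Matrix.mul_one] at hX1
      rw [Matrix.mul_sub, trace_sub, hX1, sub_self]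
    exact sub_eq_zero.mp (eq_zero_of_transpose_eq_neg_of_trace_mul_eq_zero hskew horth)
  · intro h b X _ _
    rw [omegaFun_mul_right, h, omegaFun_eq_trace]

/-- The contact form `ω` on `SL(2p,ℝ)` is invariant under right translation
`R_a : b ↦ b a` (as a form on `SL(2p,ℝ)`) if and only if `aᵀ J_{2p} a = J_{2p}`,
i.e. `a` belongs to the symplectic group `Sp(2p,ℝ)` with respect to `J_{2p}`;
this is the maximal right-invariance group of `ω`. -/
theorem right_invariance_iff_symplectic (p : ℕ) (hp : 0 < p)
    (a : Matrix (Fin (2 * p)) (Fin (2 * p)) ℝ) (ha : a.det = 1) :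
    (∀ b X : Matrix (Fin (2 * p)) (Fin (2 * p)) ℝ, b.det = 1 →
        (b.adjugate * X).trace = 0 →
        omegaFun p (b * a) (X * a) = omegaFun p b X) ↔
      aᵀ * Jmat p * a = Jmat p :=
  right_invariance_iff_symplectic_general p a
end
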